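/- arXiv:2310.05581 — 5 statements merged into one kernel-verified Lean document; each statement's English description precedes it below -/
import Mathlib

section
/- Let κ be an (N−2)-dimensional affine subspace of ℝ^N and let S be a set of hyperplanes each containing κ, closed under the operation of reflecting any member in any other member. If S is infinite, then every hyperplane containing κ belongs to the closure of S (in the natural topology on hyperplanes through κ, parametrized by their unit normals). -/
open scoped RealInnerProductSpace
open Complex

local notation "conj'" => starRingEnd ℂ

section Aux

/-- orbit lemma on the unit circle -/
lemma expI_closure {F : Set ℂ} (hop : ∀ w ∈ F, ∀ w' ∈ F, w ^ 2 * conj' w' ∈ F)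
    {u v : ℝ} (ha : Complex.exp (u * I) ∈ F) (hb : Complex.exp (v * I) ∈ F) :
    ∀ n : ℤ, Complex.exp ((v + n * (u - v)) * I) ∈ F := by
  set φ := u - v with hφ
  set P : ℝ → Prop := fun s => Complex.exp ((s:ℂ) * I) ∈ F with hP
  have hPc : ∀ {x y : ℝ}, P x → x = y → P y := by rintro x y h rfl; exact h
  have key : ∀ s t : ℝ, P s → P t → P (2*s - t) := by
    intro s t hs ht
    have := hop _ hs _ ht
    rw [← Complex.exp_conj, sq, ← Complex.exp_add, ← Complex.exp_add] at this
    have he : (s:ℂ) * I + (s:ℂ) * I + conj' ((t:ℂ) * I) = ((2*s - t : ℝ):ℂ) * I := by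
      simp [Complex.conj_ofReal]
      ring
    rwa [he] at this
  have main : ∀ n : ℤ, P (v + n * φ) ∧ P (v + (n+1) * φ) := by
    intro n
    induction n using Int.induction_on with
    | zero =>
      refine ⟨hPc hb (by push_cast; ring), hPc ha (by push_cast [hφ]; ring)⟩
    | succ i ih =>
      refine ⟨hPc ih.2 (by push_cast; ring), hPc (key _ _ ih.2 ih.1) (by push_cast; ring)⟩
    | pred i ih =>
      refine ⟨hPc (key _ _ ih.1 ih.2) (by push_cast; ring), hPc ih.1 (by push_cast; ring)⟩
  intro n
  have h := (main n).1
  have he : ((v + n*φ : ℝ) : ℂ) * I = ((v:ℂ) + (n:ℂ) * ((u:ℂ) - (v:ℂ))) * I := by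
    push_cast [hφ]; ring
  simpa only [hP, he] using h

/-- density lemma: an infinite subset of the unit circle closed under `w² * conj w'`
is dense in the circle. -/
lemma circle_dense {F : Set ℂ} (habs : ∀ w ∈ F, ‖w‖ = 1)
    (hop : ∀ w ∈ F, ∀ w' ∈ F, w ^ 2 * conj' w' ∈ F) (hinf : F.Infinite) :
    ∀ t : ℂ, ‖t‖ = 1 → ∀ ε : ℝ, 0 < ε → ∃ w ∈ F, ‖t - w‖ < ε := by
  intro t ht ε hε
  have hexp : ∀ w ∈ F, Complex.exp (w.arg * I) = w := by
    intro w hw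
    have := Complex.norm_mul_exp_arg_mul_I w
    rwa [habs w hw, ofReal_one, one_mul] at this
  have hinj : Set.InjOn Complex.arg F := by
    intro w hw w' hw' h
    rw [← hexp w hw, ← hexp w' hw', h]
  have hAinf : (Complex.arg '' F).Infinite := hinf.image hinj
  have hAsub : Complex.arg '' F ⊆ Set.Icc (-Real.pi) Real.pi := by
    rintro _ ⟨w, -, rfl⟩
    exact ⟨(Complex.neg_pi_lt_arg w).le, Complex.arg_le_pi w⟩
  obtain ⟨x, -, hx⟩ := hAinf.exists_accPt_of_subset_isCompact isCompact_Icc hAsub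
  rw [accPt_iff_nhds] at hx
  set δ := min ε 1 with hδ
  have hδpos : 0 < δ := lt_min hε one_pos
  obtain ⟨y, ⟨hyb, hyA⟩, hyx⟩ := hx (Metric.ball x (δ/4)) (Metric.ball_mem_nhds x (by linarith))
  have hyxpos : 0 < dist y x := dist_pos.mpr hyx
  obtain ⟨z, ⟨hzb, hzA⟩, hzx⟩ := hx (Metric.ball x (dist y x)) (Metric.ball_mem_nhds x hyxpos)
  have hyz : y ≠ z := by
    intro h; rw [← h] at hzb; exact absurd hzb (by simp [Metric.mem_ball])
  have hyz' : |y - z| < δ/2 := by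
    have h1 : |y - x| < δ/4 := by simpa [Real.dist_eq] using hyb
    have h2 : |z - x| < δ/4 := by
      have h3 := Metric.mem_ball.mp hzb
      rw [Real.dist_eq] at h3
      rw [Real.dist_eq] at h3
      calc |z - x| < |y - x| := h3
        _ < δ/4 := h1
    calc |y - z| = |(y - x) - (z - x)| := by ring_nf
      _ ≤ |y - x| + |z - x| := abs_sub _ _
      _ < δ/2 := by linarith
  obtain ⟨a, haF, haarg⟩ := hyA
  obtain ⟨b, hbF, hbarg⟩ := hzA
  have ha : Complex.exp ((y:ℂ) * I) = a := by rw [← haarg]; exact hexp a haF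
  have hb : Complex.exp ((z:ℂ) * I) = b := by rw [← hbarg]; exact hexp b hbF
  have horb : ∀ n : ℤ, Complex.exp (((z:ℂ) + n * ((y:ℂ) - z)) * I) ∈ F :=
    expI_closure hop (ha ▸ haF) (hb ▸ hbF)
  set φ := y - z with hφ
  have hφne : φ ≠ 0 := sub_ne_zero.mpr hyz
  set τ := t.arg with hτ
  set n := round ((τ - z)/φ) with hn
  set s := z + n * φ with hs
  have hclose : |τ - s| < δ/4 := by
    have h1 : |(τ - z)/φ - n| ≤ 1/2 := abs_sub_round _
    have h2 : τ - s = φ * ((τ - z)/φ - n) := by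
      field_simp [hs]
      ring
    rw [h2, abs_mul]
    have hφlt : |φ| < δ/2 := hyz'
    nlinarith [abs_nonneg φ, abs_nonneg ((τ - z)/φ - (n:ℝ))]
  have hsF : Complex.exp ((s:ℂ) * I) ∈ F := by
    have := horb n
    have he : ((z:ℂ) + n * ((y:ℂ) - z)) * I = ((s:ℂ)) * I := by
      rw [hs]; push_cast [hφ]; ring
    rwa [he] at this
  refine ⟨Complex.exp ((s:ℂ) * I), hsF, ?_⟩
  have htexp : t = Complex.exp ((τ:ℂ) * I) := by
    have := Complex.norm_mul_exp_arg_mul_I t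
    rw [ht, ofReal_one, one_mul] at this
    exact this.symm
  have hfac : t - Complex.exp ((s:ℂ) * I)
      = Complex.exp ((s:ℂ) * I) * (Complex.exp (((τ - s : ℝ):ℂ) * I) - 1) := by
    rw [htexp, mul_sub, mul_one, ← Complex.exp_add]
    congr 2
    push_cast; ring
  rw [hfac, norm_mul, Complex.norm_exp_ofReal_mul_I, one_mul]
  have hb1 : ‖((τ - s : ℝ):ℂ) * I‖ ≤ 1 := by
    rw [norm_mul, Complex.norm_I, mul_one, Complex.norm_real, Real.norm_eq_abs]
    linarith [hδpos, min_le_right ε 1, hclose]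
  have h2le := Complex.norm_exp_sub_one_le hb1
  rw [norm_mul, Complex.norm_I, mul_one, Complex.norm_real, Real.norm_eq_abs] at h2le
  have hδε : δ ≤ ε := min_le_left ε 1
  calc ‖Complex.exp (((τ - s : ℝ):ℂ) * I) - 1‖ ≤ 2 * |τ - s| := h2le
    _ < ε := by linarith

variable {E : Type*} [NormedAddCommGroup E] [InnerProductSpace ℝ E]

lemma refl_inner (ν u v : E) (hν : ‖ν‖ = 1) :
    ⟪u - (2 * ⟪u, ν⟫) • ν, v - (2 * ⟪v, ν⟫) • ν⟫ = ⟪u, v⟫ := by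
  have h1 : ⟪ν, ν⟫ = 1 := by rw [real_inner_self_eq_norm_sq, hν]; norm_num
  simp only [inner_sub_left, inner_sub_right, real_inner_smul_left, real_inner_smul_right]
  rw [real_inner_comm ν u, real_inner_comm ν v, h1]
  ring

lemma unit_pm [FiniteDimensional ℝ E] {W : Submodule ℝ E}
    (hW : Module.finrank ℝ W = 1) {u v : E} (hu : u ∈ W) (hv : v ∈ W)
    (hun : ‖u‖ = 1) (hvn : ‖v‖ = 1) : u = v ∨ u = -v := by
  have hv0 : v ≠ 0 := by intro h; rw [h] at hvn; simp at hvn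
  have hsp : (ℝ ∙ v) = W :=
    Submodule.eq_of_le_of_finrank_eq ((Submodule.span_singleton_le_iff_mem _ _).mpr hv)
      (by rw [finrank_span_singleton hv0, hW])
  rw [← hsp] at hu
  obtain ⟨t, ht⟩ := Submodule.mem_span_singleton.mp hu
  have habs : |t| = 1 := by
    have h2 := congrArg norm ht
    rw [norm_smul, hun, hvn, mul_one] at h2
    simpa using h2
  rcases (abs_eq (by norm_num : (0:ℝ) ≤ 1)).mp habs with h | h
  · left; rw [← ht, h, one_smul]
  · right; rw [← ht, h, neg_smul, one_smul]

lemma exists_unit_normal [FiniteDimensional ℝ E] {W : Submodule ℝ E}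
    (hW : 0 < Module.finrank ℝ W) : ∃ ν : E, ν ∈ W ∧ ‖ν‖ = 1 := by
  have : Nontrivial W := Module.nontrivial_of_finrank_pos hW
  obtain ⟨x, hx0⟩ := exists_ne (0 : W)
  have hx0' : (x : E) ≠ 0 := by
    simpa [Submodule.coe_eq_zero] using hx0
  refine ⟨‖(x:E)‖⁻¹ • (x:E), W.smul_mem _ x.2, ?_⟩
  rw [norm_smul, norm_inv, norm_norm, inv_mul_cancel₀ (norm_ne_zero_iff.mpr hx0')]

lemma creflect (z w : ℂ) (hw : w * conj' w = 1) :
    z - ((2 * (z * conj' w).re : ℝ) : ℂ) * w = -w^2 * conj' z := by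
  have h := Complex.add_conj (z * conj' w)
  rw [map_mul, Complex.conj_conj] at h
  rw [← h]
  linear_combination (-z) * hw

end Aux

section Aux2
variable {E : Type*} [NormedAddCommGroup E] [InnerProductSpace ℝ E]

lemma span_eq_of_finrank_one [FiniteDimensional ℝ E] {W : Submodule ℝ E}
    (hW : Module.finrank ℝ W = 1) {v : E} (hv : v ∈ W) (hvn : ‖v‖ = 1) : (ℝ ∙ v) = W := by
  have hv0 : v ≠ 0 := by intro h; rw [h] at hvn; simp at hvn
  exact Submodule.eq_of_le_of_finrank_eq ((Submodule.span_singleton_le_iff_mem _ _).mpr hv)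
    (by rw [finrank_span_singleton hv0, hW])

lemma cre (x0 x1 y0 y1 : ℝ) :
    (((x0:ℂ) + x1*I) * conj' ((y0:ℂ) + y1*I)).re = x0*y0 + x1*y1 := by
  simp [Complex.mul_re]

lemma min_close {a b e : ℝ} (ha : 0 ≤ a) (hb : 0 ≤ b) (hpar : a^2 + b^2 = 4)
    (hprod : a*b < e) (hcase : a ≤ b) : a < e := by
  have h1 : (1:ℝ) ≤ b := by nlinarith
  nlinarith [mul_le_mul_of_nonneg_left h1 ha]

lemma norm_eq_one_of_inner {u : E} (h : ⟪u, u⟫ = 1) : ‖u‖ = 1 := by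
  rw [real_inner_self_eq_norm_sq] at h
  rw [← Real.sqrt_sq (norm_nonneg u), h, Real.sqrt_one]

end Aux2

noncomputable def reflMap {N : ℕ} (p ν x : EuclideanSpace ℝ (Fin N)) :
    EuclideanSpace ℝ (Fin N) :=
  x - (2 * ⟪x - p, ν⟫) • ν

/-- if an infinite set `S` of hyperplanes all containing a fixed
`(N−2)`-dimensional affine subspace `κ` is closed under reflecting any member in any other
member, then every hyperplane containing `κ` lies in the closure of `S`, in the sense that
its unit normals are approximated arbitrarily well by unit normals of members of `S`. -/
theorem stmt2 {N : ℕ} (hN : 2 ≤ N)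
    (κ : AffineSubspace ℝ (EuclideanSpace ℝ (Fin N)))
    (hκne : (κ : Set (EuclideanSpace ℝ (Fin N))).Nonempty)
    (hκdim : Module.finrank ℝ κ.direction = N - 2)
    (S : Set (AffineSubspace ℝ (EuclideanSpace ℝ (Fin N))))
    (hhyp : ∀ Pl ∈ S, κ ≤ Pl ∧ Module.finrank ℝ Pl.direction = N - 1)
    (hrefl : ∀ Pl ∈ S, ∀ Pl' ∈ S, ∀ p ν : EuclideanSpace ℝ (Fin N),
      p ∈ Pl → ν ∈ Pl.directionᗮ → ‖ν‖ = 1 →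
      ∃ Pl'' ∈ S, reflMap p ν '' (Pl' : Set (EuclideanSpace ℝ (Fin N))) =
        (Pl'' : Set (EuclideanSpace ℝ (Fin N))))
    (hinf : S.Infinite) :
    ∀ Pl₀ : AffineSubspace ℝ (EuclideanSpace ℝ (Fin N)),
      κ ≤ Pl₀ → Module.finrank ℝ Pl₀.direction = N - 1 →
      ∀ ν₀ : EuclideanSpace ℝ (Fin N), ν₀ ∈ Pl₀.directionᗮ → ‖ν₀‖ = 1 →
      ∀ ε > 0, ∃ Pl' ∈ S, ∃ ν' : EuclideanSpace ℝ (Fin N),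
        ν' ∈ Pl'.directionᗮ ∧ ‖ν'‖ = 1 ∧ ‖ν₀ - ν'‖ < ε := by
  classical
  intro Pl₀ hPl₀le hPl₀dim ν₀ hν₀mem hν₀norm ε hε
  obtain ⟨p, hp⟩ := hκne
  set V := κ.directionᗮ with hVdef
  have hV2 : Module.finrank ℝ V = 2 := by
    rw [hVdef]
    have h := Submodule.finrank_add_finrank_orthogonal κ.direction
    rw [hκdim] at h
    rw [show Module.finrank ℝ (EuclideanSpace ℝ (Fin N)) = N from finrank_euclideanSpace_fin] at h
    omega
  have hsubV : ∀ {Pl : AffineSubspace ℝ (EuclideanSpace ℝ (Fin N))}, κ ≤ Pl →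
      Pl.directionᗮ ≤ V := fun hle => Submodule.orthogonal_le (AffineSubspace.direction_le hle)
  have hrank1 : ∀ {Pl : AffineSubspace ℝ (EuclideanSpace ℝ (Fin N))},
      Module.finrank ℝ Pl.direction = N - 1 → Module.finrank ℝ Pl.directionᗮ = 1 := by
    intro Pl h
    have h2 := Submodule.finrank_add_finrank_orthogonal Pl.direction
    rw [h] at h2
    rw [show Module.finrank ℝ (EuclideanSpace ℝ (Fin N)) = N from finrank_euclideanSpace_fin] at h2
    omega
  set b : OrthonormalBasis (Fin 2) ℝ V := (stdOrthonormalBasis ℝ V).reindex (finCongr hV2)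
    with hbdef
  set c : V → ℂ := fun v => ((⟪b 0, v⟫ : ℝ) : ℂ) + ((⟪b 1, v⟫ : ℝ) : ℂ) * I with hc
  have hinner : ∀ v w : V, (c v * conj' (c w)).re = ⟪v, w⟫ := by
    intro v w
    rw [← b.sum_inner_mul_inner v w, Fin.sum_univ_two]
    simp only [hc]
    rw [cre]
    rw [real_inner_comm v (b 0), real_inner_comm v (b 1)]
  have hnormsq : ∀ v : V, Complex.normSq (c v) = ‖v‖^2 := by
    intro v
    have h1 := hinner v v
    rw [Complex.mul_conj] at h1
    rw [real_inner_self_eq_norm_sq] at h1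
    simpa using h1
  have habs : ∀ v : V, ‖c v‖ = ‖v‖ := by
    intro v
    rw [← Real.sqrt_sq (norm_nonneg (c v)), Complex.sq_norm, hnormsq,
      Real.sqrt_sq (norm_nonneg v)]
  have hmulconj : ∀ v : V, ‖v‖ = 1 → c v * conj' (c v) = 1 := by
    intro v hv
    rw [Complex.mul_conj, hnormsq, hv]
    norm_num
  have hcsub : ∀ v w : V, c (v - w) = c v - c w := by
    intro v w
    simp only [hc, inner_sub_right]
    push_cast
    ring
  have hcadd : ∀ v w : V, c (v + w) = c v + c w := by
    intro v w
    simp only [hc, inner_add_right]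
    push_cast
    ring
  have hcsmul : ∀ (t : ℝ) (v : V), c (t • v) = (t:ℂ) * c v := by
    intro t v
    simp only [hc, real_inner_smul_right]
    push_cast
    ring
  have hcneg : ∀ v : V, c (-v) = - c v := by
    intro v
    have := hcsmul (-1) v
    simpa using this
  have hcinj : ∀ v w : V, c v = c w → v = w := by
    intro v w h
    have h2 : ⟪v - w, v - w⟫ = 0 := by
      rw [← hinner, hcsub, h, sub_self, zero_mul, Complex.zero_re]
    exact sub_eq_zero.mp (inner_self_eq_zero.mp h2)
  set F : Set ℂ := {w : ℂ | ∃ Pl ∈ S, ∃ ν : EuclideanSpace ℝ (Fin N), ∃ hν : ν ∈ V,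
      ν ∈ Pl.directionᗮ ∧ ‖ν‖ = 1 ∧ w = (c ⟨ν, hν⟩)^2} with hF
  have hnormV : ∀ (ν : EuclideanSpace ℝ (Fin N)) (hν : ν ∈ V), ‖(⟨ν, hν⟩ : V)‖ = ‖ν‖ := by
    intro ν hν; rfl
  have habsF : ∀ w ∈ F, ‖w‖ = 1 := by
    rintro w ⟨Pl, hPlS, ν, hνV, hνp, hν1, rfl⟩
    rw [norm_pow, habs, hnormV, hν1, one_pow]
  
  have hopF : ∀ w ∈ F, ∀ w' ∈ F, w ^ 2 * conj' w' ∈ F := by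
    rintro w ⟨Pl, hPlS, ν, hνV, hνp, hν1, rfl⟩ w' ⟨Pl', hPl'S, ν', hν'V, hν'p, hν'1, rfl⟩
    have hpPl : p ∈ Pl := (hhyp Pl hPlS).1 hp
    obtain ⟨Pl'', hPl''S, himg⟩ := hrefl Pl hPlS Pl' hPl'S p ν hpPl hνp hν1
    set r : EuclideanSpace ℝ (Fin N) := ν' - (2 * ⟪ν', ν⟫) • ν with hrdef
    have hrinner : ∀ u v : EuclideanSpace ℝ (Fin N),
        ⟪u - (2*⟪u,ν⟫)•ν, v - (2*⟪v,ν⟫)•ν⟫ = ⟪u,v⟫ := fun u v => refl_inner ν u v hν1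
    have hrnorm : ‖r‖ = 1 := by
      apply norm_eq_one_of_inner
      rw [hrdef, hrinner ν' ν', real_inner_self_eq_norm_sq, hν'1]
      norm_num
    have hrV : r ∈ V := V.sub_mem hν'V (V.smul_mem _ hνV)
    have hdirle : Pl''.direction ≤ (ℝ ∙ r)ᗮ := by
      rw [AffineSubspace.direction_eq_vectorSpan, vectorSpan_def]
      apply Submodule.span_le.mpr
      rintro m ⟨x'', hx'', y'', hy'', rfl⟩
      rw [SetLike.mem_coe, Submodule.mem_orthogonal_singleton_iff_inner_right]
      rw [← himg] at hx'' hy''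
      obtain ⟨x', hx', rfl⟩ := hx''
      obtain ⟨y', hy', rfl⟩ := hy''
      have hsub : reflMap p ν x' -ᵥ reflMap p ν y'
          = (x' - y') - (2 * ⟪x' - y', ν⟫) • ν := by
        simp only [vsub_eq_sub, reflMap, inner_sub_left]
        module
      beta_reduce
      rw [hsub, hrdef, hrinner ν' (x' - y')]
      have hd : x' - y' ∈ Pl'.direction := by
        have h5 := AffineSubspace.vsub_mem_direction hx' hy'
        rwa [vsub_eq_sub] at h5
      exact (Submodule.mem_orthogonal' _ _).mp hν'p _ hd
    have hrperp : r ∈ Pl''.directionᗮ :=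
      Submodule.orthogonal_le hdirle
        (Submodule.le_orthogonal_orthogonal _ (Submodule.mem_span_singleton_self r))
    have hrsub : (⟨r, hrV⟩ : V)
        = ⟨ν', hν'V⟩ - (2 * ⟪(⟨ν', hν'V⟩ : V), (⟨ν, hνV⟩ : V)⟫) • ⟨ν, hνV⟩ := by
      apply Subtype.ext
      simp [hrdef, Submodule.coe_inner]
    have hrc : c ⟨r, hrV⟩ = -(c ⟨ν, hνV⟩)^2 * conj' (c ⟨ν', hν'V⟩) := by
      rw [hrsub, hcsub, hcsmul]
      have h2 := creflect (c ⟨ν', hν'V⟩) (c ⟨ν, hνV⟩) (hmulconj _ (by rw [hnormV]; exact hν1))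
      rw [hinner] at h2
      exact_mod_cast h2
    refine ⟨Pl'', hPl''S, r, hrV, hrperp, hrnorm, ?_⟩
    rw [hrc, map_pow]
    ring
  have hFinf : F.Infinite := by
    have hex : ∀ Pl : ↥S, ∃ w : ℂ, ∃ ν : EuclideanSpace ℝ (Fin N), ∃ hν : ν ∈ V,
        ν ∈ (Pl : AffineSubspace ℝ (EuclideanSpace ℝ (Fin N))).directionᗮ ∧ ‖ν‖ = 1
          ∧ w = (c ⟨ν, hν⟩)^2 := by
      rintro ⟨Pl, hPl⟩
      obtain ⟨ν, hνp, hν1⟩ := exists_unit_normal (W := Pl.directionᗮ)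
        (by rw [hrank1 (hhyp Pl hPl).2]; norm_num)
      exact ⟨_, ν, hsubV (hhyp Pl hPl).1 hνp, hνp, hν1, rfl⟩
    choose g νg hνgV hνgperp hνg1 hgdef using hex
    have hgF : ∀ Pl : ↥S, g Pl ∈ F := fun Pl =>
      ⟨Pl, Pl.2, νg Pl, hνgV Pl, hνgperp Pl, hνg1 Pl, hgdef Pl⟩
    have hginj : Function.Injective g := by
      intro P1 P2 hg
      have hsq : (c ⟨νg P1, hνgV P1⟩)^2 = (c ⟨νg P2, hνgV P2⟩)^2 := by
        rw [← hgdef, ← hgdef, hg]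
      have hpm : (⟨νg P1, hνgV P1⟩ : V) = ⟨νg P2, hνgV P2⟩ ∨
          (⟨νg P1, hνgV P1⟩ : V) = -⟨νg P2, hνgV P2⟩ := by
        rcases sq_eq_sq_iff_eq_or_eq_neg.mp hsq with h | h
        · exact Or.inl (hcinj _ _ h)
        · exact Or.inr (hcinj _ _ (by rw [hcneg]; exact h))
      have hmem : νg P1 ∈ (P2 : AffineSubspace ℝ (EuclideanSpace ℝ (Fin N))).directionᗮ := by
        rcases hpm with h | h
        · have h6 := congrArg (Subtype.val) h
          simp only [] at h6
          rw [show νg P1 = νg P2 from h6]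
          exact hνgperp P2
        · have h6 := congrArg (Subtype.val) h
          simp only [Submodule.coe_neg] at h6
          rw [show νg P1 = -νg P2 from h6]
          exact Submodule.neg_mem _ (hνgperp P2)
      have hsp1 : (ℝ ∙ (νg P1)) = (P1 : AffineSubspace ℝ (EuclideanSpace ℝ (Fin N))).directionᗮ :=
        span_eq_of_finrank_one (hrank1 (hhyp _ P1.2).2) (hνgperp P1) (hνg1 P1)
      have hsp2 : (ℝ ∙ (νg P1)) = (P2 : AffineSubspace ℝ (EuclideanSpace ℝ (Fin N))).directionᗮ :=
        span_eq_of_finrank_one (hrank1 (hhyp _ P2.2).2) hmem (hνg1 P1)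
      have hdir : (P1 : AffineSubspace ℝ (EuclideanSpace ℝ (Fin N))).direction
          = (P2 : AffineSubspace ℝ (EuclideanSpace ℝ (Fin N))).direction := by
        rw [← Submodule.orthogonal_orthogonal
              (P1 : AffineSubspace ℝ (EuclideanSpace ℝ (Fin N))).direction,
            ← Submodule.orthogonal_orthogonal
              (P2 : AffineSubspace ℝ (EuclideanSpace ℝ (Fin N))).direction,
            ← hsp1, ← hsp2]
      apply Subtype.ext
      apply AffineSubspace.ext_of_direction_eq hdir
      exact ⟨p, (hhyp _ P1.2).1 hp, (hhyp _ P2.2).1 hp⟩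
    have hSinf : Infinite ↥S := hinf.to_subtype
    have hFi : Infinite ↥F := Infinite.of_injective (fun Pl => (⟨g Pl, hgF Pl⟩ : ↥F))
      (fun a b h => hginj (congrArg Subtype.val h))
    exact Set.infinite_coe_iff.mp hFi
  have hν₀V : ν₀ ∈ V := hsubV hPl₀le hν₀mem
  set z := c ⟨ν₀, hν₀V⟩ with hz
  have hzabs : ‖z‖ = 1 := by rw [hz, habs, hnormV, hν₀norm]
  obtain ⟨w, hwF, hwclose⟩ := circle_dense habsF hopF hFinf (z^2)
    (by rw [norm_pow, hzabs, one_pow]) ε hε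
  obtain ⟨Pl', hPl'S, ν', hν'V, hν'p, hν'1, rfl⟩ := hwF
  set w' := c ⟨ν', hν'V⟩ with hw'
  have hsubnorm : ‖ν₀ - ν'‖ = ‖z - w'‖ := by
    rw [hz, hw', ← hcsub, habs]
    rfl
  have haddnorm : ‖ν₀ + ν'‖ = ‖z + w'‖ := by
    rw [hz, hw', ← hcadd, habs]
    rfl
  have hpar : ‖ν₀ - ν'‖^2 + ‖ν₀ + ν'‖^2 = 4 := by
    have hpl := parallelogram_law_with_norm ℝ ν₀ ν'
    rw [hν₀norm, hν'1] at hpl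
    nlinarith [hpl]
  have hprod : ‖ν₀ - ν'‖ * ‖ν₀ + ν'‖ < ε := by
    rw [hsubnorm, haddnorm, ← norm_mul]
    have he : (z - w') * (z + w') = z^2 - w'^2 := by ring
    rw [he]
    exact hwclose
  rcases le_total ‖ν₀ - ν'‖ ‖ν₀ + ν'‖ with hcase | hcase
  · refine ⟨Pl', hPl'S, ν', hν'p, hν'1, ?_⟩
    exact min_close (norm_nonneg _) (norm_nonneg _) hpar hprod hcase
  · refine ⟨Pl', hPl'S, -ν', Submodule.neg_mem _ hν'p, by rw [norm_neg]; exact hν'1, ?_⟩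
    rw [sub_neg_eq_add]
    exact min_close (norm_nonneg _) (norm_nonneg _) (by linarith [hpar]) (by linarith [hprod]) hcase
end

section
/- Let R₀ > 0. There exists a constant α₀ with 0 < α₀ < 1, depending only on R₀, with the following property: for any (N−2)-dimensional affine subspace κ of ℝ^N whose distance from the origin is at least 2R₀ + 1, letting Q be the projection of the origin onto κ and ν₀ = Q/‖Q‖, if Π is a hyperplane containing κ with unit normal ν satisfying ν·ν₀ ≥ α₀, then the closed ball of radius R₀ centered at the origin is contained in one open half-space determined by Π. -/
open scoped RealInnerProductSpace

/-- there is `α₀ = α₀(R₀) ∈ (0,1)` such that for any `(N−2)`-dimensional affine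
subspace `κ` at distance at least `2R₀+1` from the origin, with `Q` the projection of the
origin on `κ` and `ν₀ = Q/‖Q‖`, any hyperplane `Π ⊇ κ` with unit normal `ν` satisfying
`ν·ν₀ ≥ α₀` leaves the closed ball of radius `R₀` entirely inside one open half-space. -/
theorem stmt5 {N : ℕ} (hN : 2 ≤ N) (R₀ : ℝ) (hR₀ : 0 < R₀) :
    ∃ α₀ : ℝ, 0 < α₀ ∧ α₀ < 1 ∧
      ∀ (κ Pl : AffineSubspace ℝ (EuclideanSpace ℝ (Fin N)))
        (Q ν : EuclideanSpace ℝ (Fin N)),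
        Module.finrank ℝ κ.direction = N - 2 → κ ≤ Pl →
        Module.finrank ℝ Pl.direction = N - 1 →
        Q ∈ κ → (∀ y ∈ κ, ‖Q‖ ≤ ‖y‖) → 2 * R₀ + 1 ≤ ‖Q‖ →
        ν ∈ Pl.directionᗮ → ‖ν‖ = 1 →
        α₀ ≤ ⟪ν, ‖Q‖⁻¹ • Q⟫ →
        ∀ x : EuclideanSpace ℝ (Fin N), ‖x‖ ≤ R₀ → ⟪x - Q, ν⟫ < 0 := by
  have h2R : (0:ℝ) < 2 * R₀ + 1 := by linarith
  refine ⟨(R₀ + 1/2) / (2 * R₀ + 1), by positivity, by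
    rw [div_lt_one h2R]; linarith, ?_⟩
  intro κ Pl Q ν _ _ _ _ _ hQ hν hν1 hα x hx
  have hQ0 : (0:ℝ) < ‖Q‖ := lt_of_lt_of_le h2R hQ
  have hα' : (R₀ + 1/2) / (2 * R₀ + 1) * ‖Q‖ ≤ ⟪ν, Q⟫ := by
    have := hα
    rw [real_inner_smul_right] at this
    calc (R₀ + 1/2) / (2 * R₀ + 1) * ‖Q‖ ≤ ‖Q‖⁻¹ * ⟪ν, Q⟫ * ‖Q‖ := by
          exact mul_le_mul_of_nonneg_right this hQ0.le
      _ = ⟪ν, Q⟫ := by field_simp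
  have hα'' : R₀ + 1/2 ≤ ⟪ν, Q⟫ := by
    have hpos : (0:ℝ) < (R₀ + 1/2) / (2 * R₀ + 1) := by positivity
    nlinarith [mul_le_mul_of_nonneg_left hQ hpos.le, div_mul_cancel₀ (R₀ + 1/2) h2R.ne']
  have hxν : ⟪x, ν⟫ ≤ R₀ := by
    calc ⟪x, ν⟫ ≤ ‖x‖ * ‖ν‖ := real_inner_le_norm x ν
      _ = ‖x‖ := by rw [hν1, mul_one]
      _ ≤ R₀ := hx
  have : ⟪x - Q, ν⟫ = ⟪x, ν⟫ - ⟪ν, Q⟫ := by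
    rw [inner_sub_left, real_inner_comm Q ν]
  linarith [this ▸ (by linarith : ⟪x, ν⟫ - ⟪ν, Q⟫ < 0)]
end

section
/- Let u: D → ℂ^M solve Au = 0 on an open connected set D ⊂ ℝ^N, where A is a constant-coefficient differential operator satisfying the unique continuation property and such that solutions have continuous derivatives up to the order appearing in a boundary operator B. Let Π be a hyperplane meeting D, and suppose an associated reflection operator satisfies: whenever Bu = 0 on a disc Π ∩ B_r(x) with B_r(x) ⊂ D, then u restricted to B_r(x) ∩ H⁻ equals the reflected solution obtained from u on B_r(x) ∩ H⁺, and conversely this reflection identity implies Bu = 0 on the disc. If Bu = 0 on some disc Π ∩ B_r(x₀) with B_r(x₀) ⊂ D, then Bu = 0 on the entire connected component S of D ∩ Π containing x₀. -/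
open scoped RealInnerProductSpace

/-- abstract propagation of a homogeneous boundary condition along a connected
component of `D ∩ Π`.  Here `Bz y` means "the boundary condition `Bu = 0` holds at `y`", and
`w = u − 𝑇̃_{Π,ν}(u ∘ T_Π)` is the difference between `u` and its reflected solution, so that
`w` enjoys the unique continuation property (hypothesis `hUC`, coming from (A.1)–(A.3) for
the operator `A`), and vanishing of `w` on a ball centred on `Π` is equivalent to `Bu = 0`
on the corresponding disc (hypothesis `hlink`, coming from (A.3)(a)–(b)).  If `Bu = 0` on
some disc `Π ∩ B_{r₀}(x₀)` with `B_{r₀}(x₀) ⊆ D`, then `Bu = 0` on the whole connected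
component of `D ∩ Π` containing `x₀`. -/
theorem stmt11 {N : ℕ} {F : Type*} [AddCommGroup F]
    (D : Set (EuclideanSpace ℝ (Fin N))) (hD : IsOpen D)
    (p ν : EuclideanSpace ℝ (Fin N)) (hν : ‖ν‖ = 1)
    (Bz : EuclideanSpace ℝ (Fin N) → Prop)
    (w : EuclideanSpace ℝ (Fin N) → F)
    (hUC : ∀ U : Set (EuclideanSpace ℝ (Fin N)), IsOpen U → U ⊆ D → IsPreconnected U →
      (∃ V : Set (EuclideanSpace ℝ (Fin N)), IsOpen V ∧ V.Nonempty ∧ V ⊆ U ∧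
        ∀ y ∈ V, w y = 0) →
      ∀ y ∈ U, w y = 0)
    (hlink : ∀ x : EuclideanSpace ℝ (Fin N), ⟪x - p, ν⟫ = 0 → ∀ r > (0 : ℝ),
      Metric.ball x r ⊆ D →
      ((∀ y ∈ Metric.ball x r, ⟪y - p, ν⟫ = 0 → Bz y) ↔
        (∀ y ∈ Metric.ball x r, w y = 0)))
    (x₀ : EuclideanSpace ℝ (Fin N)) (hx₀ : ⟪x₀ - p, ν⟫ = 0)
    (r₀ : ℝ) (hr₀ : 0 < r₀) (hball : Metric.ball x₀ r₀ ⊆ D)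
    (hB₀ : ∀ y ∈ Metric.ball x₀ r₀, ⟪y - p, ν⟫ = 0 → Bz y) :
    ∀ y ∈ connectedComponentIn
      (D ∩ {x : EuclideanSpace ℝ (Fin N) | ⟪x - p, ν⟫ = 0}) x₀, Bz y := by
  set Plane : Set (EuclideanSpace ℝ (Fin N)) :=
    {x : EuclideanSpace ℝ (Fin N) | ⟪x - p, ν⟫ = 0} with hPlane
  set S := connectedComponentIn (D ∩ Plane) x₀ with hS
  set O : Set (EuclideanSpace ℝ (Fin N)) :=
    {x | ∃ r > (0 : ℝ), Metric.ball x r ⊆ D ∧ ∀ y ∈ Metric.ball x r, w y = 0} with hO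
  -- key propagation lemma
  have key : ∀ x : EuclideanSpace ℝ (Fin N), ∀ r > (0 : ℝ), Metric.ball x r ⊆ D →
      ∀ x' ∈ Metric.ball x r, x' ∈ O → ∀ y ∈ Metric.ball x r, w y = 0 := by
    intro x r hr hsub x' hx' hx'O y hy
    obtain ⟨r', hr', hsub', hw'⟩ := hx'O
    have hx'self : x' ∈ Metric.ball x' r' := Metric.mem_ball_self hr'
    have hU : IsPreconnected (Metric.ball x r ∪ Metric.ball x' r') :=
      ((convex_ball _ _).isPreconnected).union x' hx' hx'self
        ((convex_ball _ _).isPreconnected)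
    have := hUC (Metric.ball x r ∪ Metric.ball x' r')
      (Metric.isOpen_ball.union Metric.isOpen_ball)
      (Set.union_subset hsub hsub') hU
      ⟨Metric.ball x' r', Metric.isOpen_ball, ⟨x', hx'self⟩,
        Set.subset_union_right, hw'⟩
    exact this y (Set.mem_union_left _ hy)
  have hOopen : IsOpen O := by
    rw [Metric.isOpen_iff]
    intro x hx
    obtain ⟨r, hr, hsub, hw⟩ := hx
    refine ⟨r, hr, fun x' hx' => ?_⟩
    refine ⟨r - dist x' x, by simpa using hx', ?_, ?_⟩
    · exact fun y hy => hsub (Metric.mem_ball.2 (by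
        have := Metric.mem_ball.1 hy
        have h2 := Metric.mem_ball.1 hx'
        calc dist y x ≤ dist y x' + dist x' x := dist_triangle _ _ _
          _ < (r - dist x' x) + dist x' x := by linarith
          _ = r := by ring))
    · intro y hy
      exact hw y (Metric.mem_ball.2 (by
        have := Metric.mem_ball.1 hy
        calc dist y x ≤ dist y x' + dist x' x := dist_triangle _ _ _
          _ < (r - dist x' x) + dist x' x := by linarith
          _ = r := by ring))
  -- complement within D is open
  have hVopen : IsOpen (D \ O) := by
    rw [Metric.isOpen_iff]
    intro x hx
    obtain ⟨hxD, hxO⟩ := hx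
    obtain ⟨r, hr, hsub⟩ := Metric.isOpen_iff.1 hD x hxD
    refine ⟨r, hr, fun x' hx' => ⟨hsub hx', fun hx'O => ?_⟩⟩
    exact hxO ⟨r, hr, hsub, key x r hr hsub x' hx' hx'O⟩
  -- x₀ ∈ S ∩ O
  have hx₀D : x₀ ∈ D := hball (Metric.mem_ball_self hr₀)
  have hx₀S : x₀ ∈ S := mem_connectedComponentIn ⟨hx₀D, hx₀⟩
  have hx₀O : x₀ ∈ O :=
    ⟨r₀, hr₀, hball, (hlink x₀ hx₀ r₀ hr₀ hball).1 hB₀⟩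
  -- S is preconnected and contained in D
  have hSpre : IsPreconnected S := isPreconnected_connectedComponentIn
  have hSsub : S ⊆ D ∩ Plane := connectedComponentIn_subset _ _
  -- S ⊆ O by connectedness
  have hSO : S ⊆ O := by
    by_contra hcon
    obtain ⟨z, hzS, hzO⟩ := Set.not_subset.1 hcon
    have := hSpre O (D \ O) hOopen hVopen
      (fun y hy => by
        by_cases h : y ∈ O
        · exact Set.mem_union_left _ h
        · exact Set.mem_union_right _ ⟨(hSsub hy).1, h⟩)
      ⟨x₀, hx₀S, hx₀O⟩ ⟨z, hzS, (hSsub hzS).1, hzO⟩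
    obtain ⟨y, _, hyO, _, hyO'⟩ := this
    exact hyO' hyO
  -- conclude
  intro y hyS
  obtain ⟨r, hr, hsub, hw⟩ := hSO hyS
  have hyPlane : ⟪y - p, ν⟫ = 0 := (hSsub hyS).2
  exact (hlink y hyPlane r hr hsub).2 hw y (Metric.mem_ball_self hr) hyPlane
end

section
/- Let Σ ⊂ B_{R₀} ⊂ ℝ^N be a closed set with connected complement G = ℝ^N \ Σ, and let E ⊂ G be a connected open set symmetric with respect to a hyperplane Π (i.e., T_Π(E) = E), with ∂E ⊂ ∂Σ ∪ T_Π(∂Σ). If E contains a point x with ‖x‖ > R₀ + 1 and x ∈ Π, and E is a connected component of G ∩ T_Π(G) intersected suitably so that E is unbounded, then Π \ closure(B_R) ⊂ E for some R > 0. -/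
open scoped RealInnerProductSpace
open Set Metric

lemma seg_joined {F : Type*} [NormedAddCommGroup F] [NormedSpace ℝ F]
    {R : ℝ} (hR : 0 ≤ R) (b : F) (hb : R < ‖b‖) (M : ℝ) (hM : ‖b‖ ≤ M) :
    JoinedIn {y : F | R < ‖y‖} b ((M / ‖b‖) • b) := by
  have hb0 : (0:ℝ) < ‖b‖ := hR.trans_lt hb
  have hc1 : (1:ℝ) ≤ M / ‖b‖ := (one_le_div hb0).2 hM
  have hseg : segment ℝ b ((M / ‖b‖) • b) ⊆ {y : F | R < ‖y‖} := by
    rintro y ⟨s, t, hs, ht, hst, rfl⟩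
    have hy : s • b + t • ((M / ‖b‖) • b) = (s + t * (M / ‖b‖)) • b := by
      rw [smul_smul, add_smul]
    rw [hy]
    have h1 : (1:ℝ) ≤ s + t * (M / ‖b‖) := by nlinarith
    have h0 : (0:ℝ) ≤ s + t * (M / ‖b‖) := by linarith
    rw [Set.mem_setOf_eq, norm_smul, Real.norm_eq_abs, abs_of_nonneg h0]
    nlinarith
  have hjo := ((convex_segment b ((M / ‖b‖) • b)).isPathConnected
    ⟨b, left_mem_segment ℝ _ _⟩).joinedIn b (left_mem_segment ℝ _ _)
    ((M / ‖b‖) • b) (right_mem_segment ℝ _ _)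
  exact hjo.mono hseg

lemma isPathConnected_norm_gt {F : Type*} [NormedAddCommGroup F] [NormedSpace ℝ F]
    (h : 1 < Module.rank ℝ F) {R : ℝ} (hR : 0 ≤ R) :
    IsPathConnected {y : F | R < ‖y‖} := by
  have hsph := isPathConnected_sphere h (0 : F) (r := R + 1) (by linarith)
  obtain ⟨c, hc, -⟩ := hsph
  have hcn : ‖c‖ = R + 1 := by simpa using hc
  refine ⟨c, by simp [Set.mem_setOf_eq, hcn], ?_⟩
  intro a ha
  have haR : R < ‖a‖ := ha
  set M : ℝ := max ‖a‖ ‖c‖ with hMdef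
  have hMa : ‖a‖ ≤ M := le_max_left _ _
  have hMc : ‖c‖ ≤ M := le_max_right _ _
  have hM0 : 0 ≤ M := (norm_nonneg a).trans hMa
  have hja := seg_joined hR a haR M hMa
  have hjc := seg_joined hR c (by simp [Set.mem_setOf_eq, hcn] : R < ‖c‖) M hMc
  -- join the two rescaled points along the sphere of radius M
  have hsphM := isPathConnected_sphere h (0 : F) hM0
  have ha0 : (0:ℝ) < ‖a‖ := hR.trans_lt haR
  have hc0 : (0:ℝ) < ‖c‖ := by rw [hcn]; linarith
  have hna : ‖(M / ‖a‖) • a‖ = M := by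
    rw [norm_smul, Real.norm_eq_abs, abs_of_nonneg (div_nonneg hM0 ha0.le),
      div_mul_cancel₀ _ ha0.ne']
  have hnc : ‖(M / ‖c‖) • c‖ = M := by
    rw [norm_smul, Real.norm_eq_abs, abs_of_nonneg (div_nonneg hM0 hc0.le),
      div_mul_cancel₀ _ hc0.ne']
  have hjm := hsphM.joinedIn ((M / ‖a‖) • a) (by simp [hna]) ((M / ‖c‖) • c) (by simp [hnc])
  have hsub : sphere (0:F) M ⊆ {y : F | R < ‖y‖} := by
    intro y hy
    have : ‖y‖ = M := by simpa using hy
    exact Set.mem_setOf_eq ▸ (this ▸ lt_of_lt_of_le haR hMa)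
  exact ((hja.trans (hjm.mono hsub)).trans (hjc.mono (by intro z hz; exact hz)).symm).symm


/-- let `Σ ⊆ B_{R₀}` be a scatterer with exterior `G = ℝ^N \ Σ`, and let
`E ⊆ G` be a connected open set, symmetric with respect to a hyperplane `Π`, with
`∂E ⊆ ∂Σ ∪ T_Π(∂Σ)`, containing a point of `Π` of norm `> R₀ + 1`, and unbounded.  Then
`Π \ closure(B_R) ⊆ E` for some `R > 0`. -/
theorem stmt12 {N : ℕ} (hN : 2 ≤ N) (R₀ : ℝ) (hR₀ : 0 < R₀)
    (Sct : Set (EuclideanSpace ℝ (Fin N))) (hScl : IsClosed Sct)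
    (hSb : Sct ⊆ Metric.ball 0 R₀) (hG : IsConnected Sctᶜ)
    (p ν : EuclideanSpace ℝ (Fin N)) (hν : ‖ν‖ = 1)
    (Eset : Set (EuclideanSpace ℝ (Fin N))) (hEopen : IsOpen Eset)
    (hEconn : IsConnected Eset) (hEG : Eset ⊆ Sctᶜ)
    (hsym : reflMap p ν '' Eset = Eset)
    (hfr : frontier Eset ⊆ frontier Sct ∪ reflMap p ν '' frontier Sct)
    (x : EuclideanSpace ℝ (Fin N)) (hxE : x ∈ Eset) (hxPl : ⟪x - p, ν⟫ = 0)
    (hxn : R₀ + 1 < ‖x‖)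
    (hub : ¬ Bornology.IsBounded Eset) :
    ∃ R > (0 : ℝ), ∀ y : EuclideanSpace ℝ (Fin N),
      ⟪y - p, ν⟫ = 0 → R < ‖y‖ → y ∈ Eset := by
  have hrank : 1 < Module.rank ℝ (EuclideanSpace ℝ (Fin N)) := by
    have h1 : (Module.finrank ℝ (EuclideanSpace ℝ (Fin N)) : Cardinal) =
        Module.rank ℝ (EuclideanSpace ℝ (Fin N)) := Module.finrank_eq_rank ℝ _
    rw [← h1, finrank_euclideanSpace, Fintype.card_fin]
    exact_mod_cast Nat.lt_of_lt_of_le Nat.one_lt_two hN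
  set K : ℝ := 3 * R₀ + 2 * ‖p‖ with hKdef
  have hK0 : 0 < K := by have := norm_nonneg p; positivity
  -- every frontier point of Eset has norm ≤ K
  have hSn : ∀ w ∈ frontier Sct, ‖w‖ < R₀ := by
    intro w hw
    have : w ∈ Sct := hScl.closure_eq ▸ frontier_subset_closure hw
    simpa using hSb this
  have hfrb : ∀ z ∈ frontier Eset, ‖z‖ ≤ K := by
    intro z hz
    rcases hfr hz with h | ⟨w, hw, rfl⟩
    · have := hSn z h; have := norm_nonneg p; linarith
    · have hw1 : ‖w‖ < R₀ := hSn w hw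
      have h1 : ‖reflMap p ν w‖ ≤ ‖w‖ + ‖(2 * ⟪w - p, ν⟫) • ν‖ := norm_sub_le _ _
      have h2 : ‖(2 * ⟪w - p, ν⟫) • ν‖ = |2 * ⟪w - p, ν⟫| := by
        rw [norm_smul, Real.norm_eq_abs, hν, mul_one]
      have h3 : |⟪w - p, ν⟫| ≤ ‖w - p‖ := by
        have := abs_real_inner_le_norm (w - p) ν
        rwa [hν, mul_one] at this
      have h4 : ‖w - p‖ ≤ ‖w‖ + ‖p‖ := norm_sub_le _ _
      have h5 : |2 * ⟪w - p, ν⟫| = 2 * |⟪w - p, ν⟫| := by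
        rw [abs_mul]; norm_num
      rw [h2, h5] at h1
      have := abs_nonneg ⟪w - p, ν⟫
      linarith
  -- the exterior of the ball of radius K
  set S : Set (EuclideanSpace ℝ (Fin N)) := {y | K < ‖y‖} with hSdef
  have hSpre : IsPreconnected S :=
    (isPathConnected_norm_gt hrank hK0.le).isConnected.isPreconnected
  have hsub : S ⊆ Eset ∪ (closure Eset)ᶜ := by
    intro y hy
    by_cases hyc : y ∈ closure Eset
    · left
      have hnf : y ∉ frontier Eset := fun h => absurd (hfrb y h) (not_le.2 hy)
      have hyi : y ∈ interior Eset := by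
        by_contra hni
        exact hnf ⟨hyc, hni⟩
      rwa [hEopen.interior_eq] at hyi
    · right; exact hyc
  have hdis : Disjoint Eset (closure Eset)ᶜ :=
    disjoint_compl_right.mono_left subset_closure
  have hne : (S ∩ Eset).Nonempty := by
    rw [Metric.isBounded_iff_subset_closedBall 0] at hub
    push_neg at hub
    obtain ⟨y, hyE, hyn⟩ := Set.not_subset.1 (hub K)
    rw [Metric.mem_closedBall, dist_zero_right] at hyn
    exact ⟨y, not_le.1 hyn, hyE⟩
  have hSE : S ⊆ Eset :=
    hSpre.subset_left_of_subset_union hEopen isClosed_closure.isOpen_compl hdis hsub hne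
  exact ⟨K, hK0, fun y _ hy => hSE hy⟩
end

section
/- Let ω > 0, d ∈ 𝕊^{N−1}, μ > 0, λ + 2μ > 0, ρ > 0, ω_p² = ρω²/(λ+2μ). Consider the longitudinal plane wave u(x) = d e^{iω_p d·x} (row vector d ∈ ℝ^N). For any unit normal ν, with strain Eu = (∇u + (∇u)ᵀ)/2 and stress σ(u) = 2μEu + λ(div u)I_N, the traction is Tr(u) = σ(u)ν = iω_p e^{iω_p d·x}(2μ(d·ν)dᵀ + λν). Consequently, for every unit vector ν, either the tangential part u_τ = u − (u·ν)ν is nonzero in norm (equal to ‖d − (d·ν)ν‖ > 0 when d is not parallel to ν), or |Tr(u)·ν| = ω_p(2μ + λ) > 0 (when d = ±ν); in particular the fourth boundary datum B⁴u = (u_τ, Tr(u)·ν) never vanishes identically on any hyperplane. -/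
open scoped RealInnerProductSpace

/-- Partial derivative of `f : ℝ^N → ℂ` in the `j`-th coordinate direction. -/
noncomputable def pdv {N : ℕ} (j : Fin N) (f : EuclideanSpace ℝ (Fin N) → ℂ)
    (x : EuclideanSpace ℝ (Fin N)) : ℂ :=
  fderiv ℝ f x (EuclideanSpace.single j (1 : ℝ))

/-- The divergence of a vector field `u : ℝ^N → ℂ^N`. -/
noncomputable def divv {N : ℕ} (u : EuclideanSpace ℝ (Fin N) → Fin N → ℂ)
    (x : EuclideanSpace ℝ (Fin N)) : ℂ :=
  ∑ i : Fin N, pdv i (fun y => u y i) x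

lemma key19 {N : ℕ} (ωp : ℝ) (d : EuclideanSpace ℝ (Fin N)) (c : ℂ)
    (x : EuclideanSpace ℝ (Fin N)) (j : Fin N) :
    pdv j (fun y => c * Complex.exp (Complex.I * (ωp : ℂ) * ((⟪d, y⟫ : ℝ) : ℂ))) x
      = c * (Complex.I * ωp * (d j)) *
        Complex.exp (Complex.I * (ωp : ℂ) * ((⟪d, x⟫ : ℝ) : ℂ)) := by
  have h1 : HasFDerivAt (fun y : EuclideanSpace ℝ (Fin N) => ((⟪d, y⟫ : ℝ) : ℂ))
      (Complex.ofRealCLM.comp (innerSL ℝ d)) x :=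
    Complex.ofRealCLM.hasFDerivAt.comp x (innerSL ℝ d).hasFDerivAt
  have h2 : HasFDerivAt (fun y : EuclideanSpace ℝ (Fin N) =>
      Complex.I * (ωp : ℂ) * ((⟪d, y⟫ : ℝ) : ℂ))
      ((Complex.I * (ωp : ℂ)) • (Complex.ofRealCLM.comp (innerSL ℝ d))) x :=
    by simpa using h1.const_mul (Complex.I * (ωp:ℂ))
  have h3 := (h2.cexp).const_mul c
  have := h3.fderiv
  rw [pdv, this]
  simp [EuclideanSpace.inner_single_right, mul_comm, real_inner_smul_left]
  ring

/-- for the longitudinal plane wave `u(x) = d e^{iω_p d·x}` the surface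
traction on a hyperplane with unit normal `ν` is
`Tr(u) = iω_p e^{iω_p d·x}(2μ(d·ν)dᵀ + λν)`; moreover either the tangential part
`u_τ = u − (u·ν)ν` is nonzero (when `d` is not parallel to `ν`), or
`|Tr(u)·ν| = ω_p(2μ+λ) > 0` (when `d = ±ν`); in particular the fourth boundary datum
`B⁴u = (u_τ, Tr(u)·ν)` never vanishes. -/
theorem stmt19 {N : ℕ} (hN : 1 ≤ N) (lam μ ρ ω ωp : ℝ)
    (hμ : 0 < μ) (hlam : 0 < lam + 2 * μ) (hρ : 0 < ρ) (hω : 0 < ω)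
    (hωp : 0 < ωp) (hωp2 : ωp ^ 2 = ρ * ω ^ 2 / (lam + 2 * μ))
    (d ν : EuclideanSpace ℝ (Fin N)) (hd : ‖d‖ = 1) (hν : ‖ν‖ = 1)
    (u : EuclideanSpace ℝ (Fin N) → Fin N → ℂ)
    (hu : ∀ x i, u x i = ((d i : ℝ) : ℂ) *
      Complex.exp (Complex.I * (ωp : ℂ) * ((⟪d, x⟫ : ℝ) : ℂ)))
    (Tr : EuclideanSpace ℝ (Fin N) → Fin N → ℂ)
    (hTr : ∀ x i, Tr x i = ∑ j : Fin N,
      (((2 * μ : ℝ) : ℂ) * ((pdv j (fun y => u y i) x + pdv i (fun y => u y j) x) / 2) +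
        ((lam : ℝ) : ℂ) * divv u x * (if i = j then 1 else 0)) * ((ν j : ℝ) : ℂ)) :
    (∀ x i, Tr x i = Complex.I * (ωp : ℂ) *
      Complex.exp (Complex.I * (ωp : ℂ) * ((⟪d, x⟫ : ℝ) : ℂ)) *
      ((2 * μ * (⟪d, ν⟫ : ℝ) * d i + lam * ν i : ℝ) : ℂ)) ∧
    0 < ωp * (2 * μ + lam) ∧
    (d ≠ (⟪d, ν⟫ : ℝ) • ν → 0 < ‖d - (⟪d, ν⟫ : ℝ) • ν‖) ∧
    ((d = ν ∨ d = -ν) → ∀ x,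
      ‖∑ i, Tr x i * ((ν i : ℝ) : ℂ)‖ = ωp * (2 * μ + lam)) ∧
    (∀ x, (∃ i, u x i - (∑ j, u x j * ((ν j : ℝ) : ℂ)) * ((ν i : ℝ) : ℂ) ≠ 0) ∨
      (∑ i, Tr x i * ((ν i : ℝ) : ℂ)) ≠ 0) := by
  set E : EuclideanSpace ℝ (Fin N) → ℂ :=
    fun x => Complex.exp (Complex.I * (ωp : ℂ) * ((⟪d, x⟫ : ℝ) : ℂ)) with hE
  have hlam' : 0 < 2 * μ + lam := by linarith
  -- partial derivatives
  have hpd : ∀ (x : EuclideanSpace ℝ (Fin N)) (i j : Fin N),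
      pdv j (fun y => u y i) x = (d i : ℂ) * (Complex.I * ωp * d j) * E x := by
    intro x i j
    have hfun : (fun y => u y i) =
        fun y => ((d i : ℝ) : ℂ) * Complex.exp (Complex.I * (ωp : ℂ) * ((⟪d, y⟫ : ℝ) : ℂ)) :=
      funext fun y => hu y i
    rw [hfun, key19]
  -- inner products as sums
  have hdd : (∑ i, (d i : ℂ) * (d i : ℂ)) = 1 := by
    have h1 : (⟪d, d⟫ : ℝ) = ∑ i, d i * d i := by
      simp only [PiLp.inner_apply, RCLike.inner_apply, conj_trivial, mul_comm]
    have h2 : (⟪d, d⟫ : ℝ) = 1 := by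
      rw [real_inner_self_eq_norm_mul_norm, hd]; ring
    norm_cast
  have hνν : (∑ i, (ν i : ℂ) * (ν i : ℂ)) = 1 := by
    have h1 : (⟪ν, ν⟫ : ℝ) = ∑ i, ν i * ν i := by
      simp only [PiLp.inner_apply, RCLike.inner_apply, conj_trivial, mul_comm]
    have h2 : (⟪ν, ν⟫ : ℝ) = 1 := by
      rw [real_inner_self_eq_norm_mul_norm, hν]; ring
    norm_cast
  have hdν : (∑ j, (d j : ℂ) * (ν j : ℂ)) = ((⟪d, ν⟫ : ℝ) : ℂ) := by
    have h1 : (⟪d, ν⟫ : ℝ) = ∑ j, d j * ν j := by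
      simp only [PiLp.inner_apply, RCLike.inner_apply, conj_trivial, mul_comm]
    rw [h1]; push_cast; ring_nf
  -- divergence
  have hdiv : ∀ x, divv u x = Complex.I * ωp * E x := by
    intro x
    rw [divv]
    calc ∑ i, pdv i (fun y => u y i) x
        = ∑ i, (d i : ℂ) * (Complex.I * ωp * d i) * E x := by
          exact Finset.sum_congr rfl fun i _ => hpd x i i
      _ = (∑ i, (d i : ℂ) * (d i : ℂ)) * (Complex.I * ωp * E x) := by
          rw [Finset.sum_mul]; exact Finset.sum_congr rfl fun i _ => by ring
      _ = Complex.I * ωp * E x := by rw [hdd, one_mul]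
  -- main traction formula
  have hTr' : ∀ x i, Tr x i = Complex.I * (ωp : ℂ) * E x *
      ((2 * μ * (⟪d, ν⟫ : ℝ) * d i + lam * ν i : ℝ) : ℂ) := by
    intro x i
    rw [hTr]
    calc ∑ j : Fin N,
        (((2 * μ : ℝ) : ℂ) * ((pdv j (fun y => u y i) x + pdv i (fun y => u y j) x) / 2) +
          ((lam : ℝ) : ℂ) * divv u x * (if i = j then 1 else 0)) * ((ν j : ℝ) : ℂ)
        = ∑ j : Fin N, (Complex.I * ωp * E x * ((2*μ:ℂ) * d i * ((d j : ℂ) * ν j)) +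
            Complex.I * ωp * E x * ((lam:ℂ) * (if i = j then 1 else 0) * ν j)) := by
          refine Finset.sum_congr rfl fun j _ => ?_
          rw [hpd x i j, hpd x j i, hdiv]
          push_cast
          ring
      _ = Complex.I * ωp * E x * ((2*μ:ℂ) * d i * (∑ j, (d j : ℂ) * ν j)) +
            Complex.I * ωp * E x * ((lam:ℂ) * ν i) := by
          rw [Finset.sum_add_distrib]
          congr 1
          · rw [Finset.mul_sum, Finset.mul_sum]
          · simp [mul_ite, ite_mul, Finset.sum_ite_eq]
      _ = Complex.I * (ωp : ℂ) * E x *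
            ((2 * μ * (⟪d, ν⟫ : ℝ) * d i + lam * ν i : ℝ) : ℂ) := by
          rw [hdν]; push_cast; ring
  -- traction dotted with ν
  have hTν : ∀ x, (∑ i, Tr x i * ((ν i : ℝ) : ℂ)) =
      Complex.I * (ωp : ℂ) * E x *
        ((2 * μ * (⟪d, ν⟫ : ℝ) * (⟪d, ν⟫ : ℝ) + lam : ℝ) : ℂ) := by
    intro x
    calc ∑ i, Tr x i * ((ν i : ℝ) : ℂ)
        = ∑ i, Complex.I * (ωp : ℂ) * E x *
            ((2 * μ * (⟪d, ν⟫ : ℝ) * d i + lam * ν i : ℝ) : ℂ) * ((ν i : ℝ) : ℂ) := by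
          exact Finset.sum_congr rfl fun i _ => by rw [hTr' x i]
      _ = Complex.I * (ωp : ℂ) * E x *
            (((2*μ:ℂ) * ((⟪d, ν⟫ : ℝ):ℂ)) * (∑ i, (d i : ℂ) * ν i) +
              (lam:ℂ) * (∑ i, (ν i : ℂ) * ν i)) := by
          simp only [Finset.mul_sum, ← Finset.sum_add_distrib, mul_add]
          refine Finset.sum_congr rfl fun i _ => by push_cast; ring
      _ = _ := by rw [hdν, hνν]; push_cast; ring
  have habsE : ∀ x, ‖E x‖ = 1 := by
    intro x
    rw [hE]
    simp [Complex.norm_exp]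
  refine ⟨hTr', by positivity, fun h => norm_sub_pos_iff.mpr h, ?_, ?_⟩
  · rintro hdv x
    have hc : (⟪d, ν⟫ : ℝ) * (⟪d, ν⟫ : ℝ) = 1 := by
      rcases hdv with h | h
      · rw [h, real_inner_self_eq_norm_mul_norm, hν]; ring
      · rw [h]
        simp only [inner_neg_left, real_inner_self_eq_norm_mul_norm, hν]
        ring
    rw [hTν x]
    rw [norm_mul, norm_mul, norm_mul, habsE]
    simp only [Complex.norm_I, Complex.norm_real, Real.norm_eq_abs]
    have h3 : 2 * μ * (⟪d, ν⟫ : ℝ) * (⟪d, ν⟫ : ℝ) + lam = 2 * μ + lam := by nlinarith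
    rw [h3, abs_of_pos hωp, abs_of_pos hlam']
    ring
  · intro x
    by_cases h : d = (⟪d, ν⟫ : ℝ) • ν
    · right
      have hc : (⟪d, ν⟫ : ℝ) * (⟪d, ν⟫ : ℝ) = 1 := by
        have h1 : ‖d‖ = |(⟪d, ν⟫ : ℝ)| * ‖ν‖ := by
          conv_lhs => rw [h]
          rw [norm_smul, Real.norm_eq_abs]
        rw [hd, hν, mul_one] at h1
        nlinarith [abs_nonneg (⟪d, ν⟫ : ℝ), sq_abs (⟪d, ν⟫ : ℝ),
          abs_mul_abs_self (⟪d, ν⟫ : ℝ)]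
      rw [hTν x]
      refine mul_ne_zero (mul_ne_zero (mul_ne_zero Complex.I_ne_zero ?_)
        (Complex.exp_ne_zero _)) ?_
      · exact_mod_cast hωp.ne'
      · rw [show 2 * μ * (⟪d, ν⟫ : ℝ) * (⟪d, ν⟫ : ℝ) + lam = 2 * μ + lam by
          nlinarith]
        exact_mod_cast hlam'.ne'
    · left
      obtain ⟨i, hi⟩ : ∃ i, d i ≠ (⟪d, ν⟫ : ℝ) * ν i := by
        by_contra hco
        push_neg at hco
        exact h (by ext i; exact hco i)
      refine ⟨i, ?_⟩
      have hsum : (∑ j, u x j * ((ν j : ℝ) : ℂ)) = E x * ((⟪d, ν⟫ : ℝ) : ℂ) := by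
        calc ∑ j, u x j * ((ν j : ℝ) : ℂ)
            = ∑ j, ((d j : ℝ) : ℂ) * E x * ((ν j : ℝ) : ℂ) := by
              exact Finset.sum_congr rfl fun j _ => by rw [hu x j]
          _ = (∑ j, (d j : ℂ) * ν j) * E x := by
              rw [Finset.sum_mul]; exact Finset.sum_congr rfl fun j _ => by ring
          _ = _ := by rw [hdν]; ring
      rw [hsum, hu x i]
      have : ((d i : ℝ) : ℂ) * E x - E x * ((⟪d, ν⟫ : ℝ) : ℂ) * ((ν i : ℝ) : ℂ)
          = E x * (((d i : ℝ) : ℂ) - ((⟪d, ν⟫ : ℝ) : ℂ) * ((ν i : ℝ) : ℂ)) := by ring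
      rw [this]
      refine mul_ne_zero (Complex.exp_ne_zero _) ?_
      rw [sub_ne_zero]
      intro hcon
      apply hi
      exact_mod_cast hcon
end
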